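/- arXiv:2011.01822 — 5 statements merged into one kernel-verified Lean document; each statement's English description precedes it below -/
import Mathlib

section
/- Let A : [0,1] → M_m(ℝ) be a continuous matrix-valued function satisfying A(x)ᵀ = A(1−x) for all x ∈ [0,1]. If U : [0,1] → M_m(ℝ) is differentiable with U′(x) = −(1/2)A(x)U(x) and U(0) = E, then the monodromy matrix U(1) is symmetric positive definite. (Remark 4.2(b), after Yudovich) -/
/-!
For `B = -A/2` the symmetry `A(x)ᵀ = A(1-x)` makes `x ↦ U(1-x)ᵀ U(x)` have derivative
`U(1-x)ᵀ (B(x) - B(1-x)ᵀ) U(x) = 0`, so it is constantly `U(1)ᵀ`. At `x = 1` this gives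
`U(1)ᵀ = U(1)`, and at `x = 1/2` it gives `U(1) = U(1/2)ᵀ U(1/2)`. This Gram matrix is positive
definite because `U(1/2)` is injective: if `U(1/2) w = 0`, then `y = U w` solves the linear
equation `y' = B y` with `y(1/2) = 0`, so backward uniqueness gives `w = y(0) = 0`.
-/

open Matrix Set

attribute [local instance] Matrix.normedAddCommGroup Matrix.normedSpace

theorem linearODE_eqOn_zero_of_eq_zero_right {E : Type*} [NormedAddCommGroup E]
    [NormedSpace ℝ E] {L : ℝ → E →L[ℝ] E} {y : ℝ → E} {a b : ℝ} (hL : ContinuousOn L (Icc a b))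
    (hy : ∀ t ∈ Icc a b, HasDerivWithinAt y (L t (y t)) (Icc a b) t) (hb : y b = 0) :
    EqOn y 0 (Icc a b) := by
  obtain ⟨K, hK⟩ := isCompact_Icc.exists_bound_of_continuousOn hL
  have hlip : ∀ t ∈ Ioc a b, LipschitzOnWith K.toNNReal (L t) univ := fun t ht => by
    refine ((L t).lipschitz.weaken ?_).lipschitzOnWith
    rw [← norm_toNNReal]
    exact Real.toNNReal_le_toNNReal (hK t (Ioc_subset_Icc_self ht))
  have hy' : ∀ t ∈ Ioc a b, HasDerivWithinAt y (L t (y t)) (Iic t) t := fun t ht =>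
    (hy t (Ioc_subset_Icc_self ht)).mono_of_mem_nhdsWithin (Icc_mem_nhdsLE_of_mem ht)
  have hzero : ∀ t ∈ Ioc a b, HasDerivWithinAt (fun _ => 0) (L t 0) (Iic t) t := fun t _ => by
    simpa using hasDerivWithinAt_const t (Iic t) (0 : E)
  exact ODE_solution_unique_of_mem_Icc_left hlip (fun t ht => (hy t ht).continuousWithinAt) hy'
    (fun _ _ => mem_univ _) continuousOn_const hzero (fun _ _ => mem_univ _) hb

namespace Matrix

variable {m n : Type*} [Fintype m] [Fintype n]

noncomputable def mulVecL : Matrix m n ℝ →L[ℝ] (n → ℝ) →L[ℝ] m → ℝ :=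
  (mulVecBilin ℝ ℝ : Matrix m n ℝ →ₗ[ℝ] (n → ℝ) →ₗ[ℝ] m → ℝ).toContinuousBilinearMap

@[simp]
theorem mulVecL_apply (M : Matrix m n ℝ) (v : n → ℝ) : mulVecL M v = M *ᵥ v := rfl

end Matrix

section MatrixODE

variable {n : Type*} [Fintype n] {s : Set ℝ} {x : ℝ}

theorem HasDerivWithinAt.matrix_mulVec {M : ℝ → Matrix n n ℝ} {v : ℝ → n → ℝ}
    {M' : Matrix n n ℝ} {v' : n → ℝ} (hM : HasDerivWithinAt M M' s x)
    (hv : HasDerivWithinAt v v' s x) :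
    HasDerivWithinAt (fun x => M x *ᵥ v x) (M x *ᵥ v' + M' *ᵥ v x) s x :=
  mulVecL.hasDerivWithinAt_of_bilinear hM hv

theorem HasDerivWithinAt.matrix_transpose_mul {P Q : ℝ → Matrix n n ℝ} {P' Q' : Matrix n n ℝ}
    (hP : HasDerivWithinAt P P' s x) (hQ : HasDerivWithinAt Q Q' s x) :
    HasDerivWithinAt (fun x => (P x)ᵀ * Q x) ((P x)ᵀ * Q' + P'ᵀ * Q x) s x :=
  ((LinearMap.mul ℝ (Matrix n n ℝ)).comp (transposeLinearEquiv n n ℝ ℝ).toLinearMap)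
    |>.toContinuousBilinearMap.hasDerivWithinAt_of_bilinear hP hQ

variable {B U : ℝ → Matrix n n ℝ}

theorem transpose_one_sub_mul_eq (hB : ∀ x ∈ Icc (0 : ℝ) 1, (B x)ᵀ = B (1 - x))
    (hU : ∀ x ∈ Icc (0 : ℝ) 1, HasDerivWithinAt U (B x * U x) (Icc 0 1) x)
    (hx : x ∈ Icc (0 : ℝ) 1) : (U (1 - x))ᵀ * U x = (U 1)ᵀ * U 0 := by
  have hreflect : MapsTo (fun x : ℝ => 1 - x) (Icc 0 1) (Icc 0 1) := fun x hx =>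
    ⟨sub_nonneg.2 hx.2, sub_le_self 1 hx.1⟩
  have hderiv : ∀ x ∈ Icc (0 : ℝ) 1,
      HasDerivWithinAt (fun x => (U (1 - x))ᵀ * U x) 0 (Icc 0 1) x := by
    intro x hx
    have hUrev :
        HasDerivWithinAt (fun x => U (1 - x)) (-(B (1 - x) * U (1 - x))) (Icc 0 1) x := by
      rw [← neg_one_smul ℝ (B (1 - x) * U (1 - x))]
      exact (hU (1 - x) (hreflect hx)).scomp x ((hasDerivWithinAt_id x _).const_sub 1) hreflect
    have hBx : (B (1 - x))ᵀ = B x := by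
      simpa using (congrArg transpose (hB x hx)).symm
    convert hUrev.matrix_transpose_mul (hU x hx) using 1
    rw [transpose_neg, transpose_mul, hBx, neg_mul, Matrix.mul_assoc, add_neg_cancel]
  have hconst := constant_of_derivWithin_zero
    (fun x hx => (hderiv x hx).differentiableWithinAt)
    (fun x hx => (hderiv x (Ico_subset_Icc_self hx)).derivWithin
      (uniqueDiffOn_Icc zero_lt_one x (Ico_subset_Icc_self hx))) x hx
  simpa using hconst

theorem mulVec_injective_of_hasDerivWithinAt [DecidableEq n] {a b t : ℝ}
    (hB : ContinuousOn B (Icc a b))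
    (hU : ∀ x ∈ Icc a b, HasDerivWithinAt U (B x * U x) (Icc a b) x) (hUa : U a = 1)
    (ht : t ∈ Icc a b) : Function.Injective (U t).mulVec := by
  refine (injective_iff_map_eq_zero (U t).mulVecLin).2 fun w hw => ?_
  have hsub : Icc a t ⊆ Icc a b := Icc_subset_Icc_right ht.2
  have hy : ∀ x ∈ Icc a t,
      HasDerivWithinAt (fun x => U x *ᵥ w) (mulVecL (B x) (U x *ᵥ w)) (Icc a t) x := by
    intro x hx
    simpa [mulVec_mulVec] using
      ((hU x (hsub hx)).mono hsub).matrix_mulVec (hasDerivWithinAt_const x _ w)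
  have hzero := linearODE_eqOn_zero_of_eq_zero_right
    (mulVecL.continuous.comp_continuousOn (hB.mono hsub)) hy hw (left_mem_Icc.2 ht.1)
  simpa [hUa] using hzero

end MatrixODE

theorem stmt4_general (m : ℕ)
    (A : ℝ → Matrix (Fin m) (Fin m) ℝ) (hAcont : ContinuousOn A (Icc 0 1))
    (hAsymm : ∀ x ∈ Icc (0:ℝ) 1, (A x)ᵀ = A (1 - x))
    (U : ℝ → Matrix (Fin m) (Fin m) ℝ) (hU0 : U 0 = 1)
    (hU : ∀ x ∈ Icc (0:ℝ) 1, HasDerivWithinAt U (-(1/2 : ℝ) • (A x * U x)) (Icc 0 1) x) :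
    (U 1).IsSymm ∧ (U 1).PosDef := by
  set B : ℝ → Matrix (Fin m) (Fin m) ℝ := fun x => -(1/2 : ℝ) • A x
  have hB : ∀ x ∈ Icc (0:ℝ) 1, (B x)ᵀ = B (1 - x) := fun x hx => by
    simp [B, transpose_smul, hAsymm x hx]
  have hU' : ∀ x ∈ Icc (0:ℝ) 1, HasDerivWithinAt U (B x * U x) (Icc 0 1) x := fun x hx => by
    simpa [B, smul_mul] using hU x hx
  have hsymm : (U 1)ᵀ = U 1 := by
    simpa [hU0] using (transpose_one_sub_mul_eq hB hU' (right_mem_Icc.2 zero_le_one)).symm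
  have hhalf : (1/2 : ℝ) ∈ Icc (0:ℝ) 1 := ⟨by norm_num, by norm_num⟩
  have hgram : (U (1/2))ᵀ * U (1/2) = U 1 := by
    have hmid := transpose_one_sub_mul_eq hB hU' hhalf
    norm_num [hU0] at hmid
    rw [hmid, hsymm]
  refine ⟨hsymm, ?_⟩
  rw [← hgram, ← conjTranspose_eq_transpose_of_trivial]
  exact PosDef.conjTranspose_mul_self _
    (mulVec_injective_of_hasDerivWithinAt (hAcont.const_smul (-(1/2 : ℝ))) hU' hU0 hhalf)

/-- Remark 4.2(b) (after Yudovich): if the continuous matrix function `A` on `[0,1]`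
satisfies `A(x)ᵀ = A(1−x)` and `U` solves `U′ = −(1/2)A(x)U`, `U(0) = E` on `[0,1]`,
then the monodromy matrix `U(1)` is symmetric positive definite. -/
theorem stmt4 (m : ℕ) (hm : 1 ≤ m)
    (A : ℝ → Matrix (Fin m) (Fin m) ℝ) (hAcont : ContinuousOn A (Icc 0 1))
    (hAsymm : ∀ x ∈ Icc (0:ℝ) 1, (A x)ᵀ = A (1 - x))
    (U : ℝ → Matrix (Fin m) (Fin m) ℝ) (hU0 : U 0 = 1)
    (hU : ∀ x ∈ Icc (0:ℝ) 1, HasDerivWithinAt U (-(1/2 : ℝ) • (A x * U x)) (Icc 0 1) x) :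
    (U 1).IsSymm ∧ (U 1).PosDef :=
  stmt4_general m A hAcont hAsymm U hU0 hU
end

section
/- Let D be an invertible real m×m matrix, let B : ℝ → M_m(ℝ) be differentiable, let B₀ : ℝ → M_m(ℝ) be arbitrary, and let U : ℝ → M_m(ℝ) be twice differentiable with U′(x) = −(1/2)D⁻¹B(x)U(x) for all x. Then for every twice differentiable η : ℝ → ℝ^m, the function h = Uη satisfies the identity D h″(x) + B₀(x)h(x) + B(x)h′(x) = D U(x) η″(x) + (B₀(x) − (1/2)B′(x) − (1/4)B(x)D⁻¹B(x)) U(x) η(x) for all x. (the change-of-variable computation of Section 3) -/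
/-!
Put `A = -(1/2) D⁻¹ B`, so that `U' = A U`. For `h = U η` the product rule gives
`h' = A h + U η'`; differentiating once more and eliminating `U η' = h' - A h` yields
`h'' = A' h + 2 A h' - A² h + U η''`. After multiplying by `D`, the choice of `A` makes
`2 D A h' = -B h'` cancel the first-order term, and `D (A' - A²) = -(1/2) B' - (1/4) B D⁻¹ B`
is the new potential.
-/

open Matrix

attribute [local instance] Matrix.normedAddCommGroup Matrix.normedSpace

section MatrixCalculus

variable {𝕜 : Type*} [NontriviallyNormedField 𝕜] [CompleteSpace 𝕜]
  {l m n : Type*} [Fintype l] [Fintype m] [Fintype n] {x : 𝕜}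

theorem HasDerivAt.mulVec {A : 𝕜 → Matrix m n 𝕜} {A' : Matrix m n 𝕜} {v : 𝕜 → n → 𝕜}
    {v' : n → 𝕜} (hA : HasDerivAt A A' x) (hv : HasDerivAt v v' x) :
    HasDerivAt (fun x => A x *ᵥ v x) (A' *ᵥ v x + A x *ᵥ v') x := by
  rw [add_comm]
  exact (mulVecBilin 𝕜 𝕜).toContinuousBilinearMap.hasDerivAt_of_bilinear (fun _ => hA)
    (fun _ => hv)

theorem HasDerivAt.matrix_mul {A : 𝕜 → Matrix l m 𝕜} {A' : Matrix l m 𝕜}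
    {B : 𝕜 → Matrix m n 𝕜} {B' : Matrix m n 𝕜} (hA : HasDerivAt A A' x)
    (hB : HasDerivAt B B' x) :
    HasDerivAt (fun x => A x * B x) (A' * B x + A x * B') x := by
  rw [add_comm]
  exact (mulLinearMap 𝕜).toContinuousBilinearMap.hasDerivAt_of_bilinear (fun _ => hA)
    (fun _ => hB)

variable {U A A' : 𝕜 → Matrix n n 𝕜} {η η' η'' h' h'' : 𝕜 → n → 𝕜}

theorem hasDerivAt_mulVec_of_hasDerivAt_eq_mul (hU : HasDerivAt U (A x * U x) x)
    (hη : HasDerivAt η (η' x) x) :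
    HasDerivAt (fun x => U x *ᵥ η x) (A x *ᵥ (U x *ᵥ η x) + U x *ᵥ η' x) x := by
  simpa only [mulVec_mulVec] using hU.mulVec hη

theorem second_deriv_mulVec_eq_of_hasDerivAt_eq_mul (hA : ∀ x, HasDerivAt A (A' x) x)
    (hU : ∀ x, HasDerivAt U (A x * U x) x) (hη : ∀ x, HasDerivAt η (η' x) x)
    (hη' : ∀ x, HasDerivAt η' (η'' x) x)
    (hh' : ∀ x, HasDerivAt (fun x => U x *ᵥ η x) (h' x) x)
    (hh'' : HasDerivAt h' (h'' x) x) :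
    h'' x = A' x *ᵥ (U x *ᵥ η x) + (2 : 𝕜) • (A x *ᵥ h' x) - (A x * A x) *ᵥ (U x *ᵥ η x)
      + U x *ᵥ η'' x := by
  have h'_eq : h' = fun x => A x *ᵥ (U x *ᵥ η x) + U x *ᵥ η' x :=
    funext fun x => (hh' x).unique (hasDerivAt_mulVec_of_hasDerivAt_eq_mul (hU x) (hη x))
  have hUη' : U x *ᵥ η' x = h' x - A x *ᵥ (U x *ᵥ η x) := by
    rw [h'_eq, add_sub_cancel_left]
  rw [h'_eq] at hh''
  have hderiv :=
    ((hA x).mulVec (hh' x)).add (hasDerivAt_mulVec_of_hasDerivAt_eq_mul (hU x) (hη' x))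
  rw [hh''.unique hderiv, hUη', mulVec_sub, ← mulVec_mulVec]
  module

end MatrixCalculus

theorem stmt6_general (m : ℕ)
    (D : Matrix (Fin m) (Fin m) ℝ) (hD : IsUnit D.det)
    (B B' B₀ : ℝ → Matrix (Fin m) (Fin m) ℝ)
    (hB : ∀ x : ℝ, HasDerivAt B (B' x) x)
    (U : ℝ → Matrix (Fin m) (Fin m) ℝ)
    (hU : ∀ x : ℝ, HasDerivAt U (-(1/2 : ℝ) • (D⁻¹ * B x * U x)) x)
    (η η' η'' : ℝ → Fin m → ℝ)
    (hη : ∀ x : ℝ, HasDerivAt η (η' x) x) (hη' : ∀ x : ℝ, HasDerivAt η' (η'' x) x)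
    (h h' h'' : ℝ → Fin m → ℝ)
    (hh : h = fun x => (U x).mulVec (η x))
    (hh' : ∀ x : ℝ, HasDerivAt h (h' x) x) (hh'' : ∀ x : ℝ, HasDerivAt h' (h'' x) x) :
    ∀ x : ℝ,
      D.mulVec (h'' x) + (B₀ x).mulVec (h x) + (B x).mulVec (h' x) =
        (D * U x).mulVec (η'' x) +
          ((B₀ x - (1/2 : ℝ) • B' x - (1/4 : ℝ) • (B x * D⁻¹ * B x)) * U x).mulVec (η x) := by
  intro x
  subst hh
  have hA : ∀ x, HasDerivAt (fun x => -(1/2 : ℝ) • (D⁻¹ * B x)) (-(1/2 : ℝ) • (D⁻¹ * B' x)) x :=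
    fun x => by
      have hderiv := ((hasDerivAt_const x D⁻¹).matrix_mul (hB x)).const_smul (-(1/2 : ℝ))
      rw [Matrix.zero_mul, zero_add] at hderiv
      exact hderiv
  have hUA : ∀ x, HasDerivAt U ((-(1/2 : ℝ) • (D⁻¹ * B x)) * U x) x := fun x => by
    simpa only [smul_mul_assoc] using hU x
  rw [second_deriv_mulVec_eq_of_hasDerivAt_eq_mul hA hUA hη hη' hh' (hh'' x)]
  simp only [mulVec_add, mulVec_sub, mulVec_smul, smul_mulVec, sub_mulVec, Matrix.sub_mul,
    smul_mul, Matrix.mul_smul, mulVec_mulVec, ← Matrix.mul_assoc, mul_nonsing_inv D hD,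
    Matrix.one_mul]
  module

/-- The change-of-variable computation of Section 3: if `U′ = −(1/2)D⁻¹B(x)U`, then for
every twice differentiable `η` the function `h = Uη` satisfies
`D h″ + B₀ h + B h′ = D U η″ + (B₀ − (1/2)B′ − (1/4)B D⁻¹ B) U η`. -/
theorem stmt6 (m : ℕ) (hm : 1 ≤ m)
    (D : Matrix (Fin m) (Fin m) ℝ) (hD : IsUnit D.det)
    (B B' B₀ : ℝ → Matrix (Fin m) (Fin m) ℝ)
    (hB : ∀ x : ℝ, HasDerivAt B (B' x) x)
    (U : ℝ → Matrix (Fin m) (Fin m) ℝ)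
    (hU : ∀ x : ℝ, HasDerivAt U (-(1/2 : ℝ) • (D⁻¹ * B x * U x)) x)
    (η η' η'' : ℝ → Fin m → ℝ)
    (hη : ∀ x : ℝ, HasDerivAt η (η' x) x) (hη' : ∀ x : ℝ, HasDerivAt η' (η'' x) x)
    (h h' h'' : ℝ → Fin m → ℝ)
    (hh : h = fun x => (U x).mulVec (η x))
    (hh' : ∀ x : ℝ, HasDerivAt h (h' x) x) (hh'' : ∀ x : ℝ, HasDerivAt h' (h'' x) x) :
    ∀ x : ℝ,
      D.mulVec (h'' x) + (B₀ x).mulVec (h x) + (B x).mulVec (h' x) =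
        (D * U x).mulVec (η'' x) +
          ((B₀ x - (1/2 : ℝ) • B' x - (1/4 : ℝ) • (B x * D⁻¹ * B x)) * U x).mulVec (η x) :=
  stmt6_general m D hD B B' B₀ hB U hU η η' η'' hη hη' h h' h'' hh hh' hh''
end

section
/- Let D be an invertible real m×m matrix and B : ℝ → M_m(ℝ) a continuous matrix-valued function with D B(x) = B(x) D for all x. If U : ℝ → M_m(ℝ) is differentiable with U′(x) = −(1/2)D⁻¹B(x)U(x) and U(0) = E, then D U(x) = U(x) D for all x. (core of Lemma 3.6) -/
/-!
`D U` and `U D` solve the same linear ODE `W' = A(x) W` with `A(x) = -(1/2) D⁻¹ B(x)`, because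
`D` commutes with `A(x)`, and both equal `D` at `0`; uniqueness for linear ODEs with continuous
coefficients (Grönwall, with the Lipschitz constant bounded on compact time intervals) makes them
equal.
-/

open Matrix Set

attribute [local instance] Matrix.normedAddCommGroup Matrix.normedSpace

theorem ODE_solution_unique_of_continuous_clm {E : Type*} [NormedAddCommGroup E]
    [NormedSpace ℝ E] {A : ℝ → E →L[ℝ] E} (hA : Continuous A) {f g : ℝ → E} {t₀ : ℝ}
    (hf : ∀ t, HasDerivAt f (A t (f t)) t) (hg : ∀ t, HasDerivAt g (A t (g t)) t)
    (heq : f t₀ = g t₀) : f = g := by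
  funext t
  obtain ⟨a, b, ht, ht₀⟩ : ∃ a b, t ∈ Ioo a b ∧ t₀ ∈ Ioo a b :=
    ⟨min t t₀ - 1, max t t₀ + 1, by grind⟩
  obtain ⟨C, hC⟩ := (isCompact_Icc (a := a) (b := b)).exists_bound_of_continuousOn hA.continuousOn
  have hLip : ∀ s ∈ Ioo a b, LipschitzOnWith C.toNNReal (A s) univ := fun s hs =>
    ((A s).lipschitz.weaken <| by
      rw [← NNReal.coe_le_coe, coe_nnnorm, Real.coe_toNNReal']
      exact le_max_of_le_left (hC s (Ioo_subset_Icc_self hs))).lipschitzOnWith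
  exact ODE_solution_unique_of_mem_Ioo hLip ht₀
    (fun s _ => ⟨hf s, trivial⟩) (fun s _ => ⟨hg s, trivial⟩) heq ht

section MatrixODE

variable {n : Type*} [Fintype n]

theorem HasDerivAt.matrix_const_mul {U : ℝ → Matrix n n ℝ} {U' : Matrix n n ℝ} {x : ℝ}
    (h : HasDerivAt U U' x) (D : Matrix n n ℝ) : HasDerivAt (fun y => D * U y) (D * U') x :=
  (LinearMap.mulLeft ℝ D).toContinuousLinearMap.hasFDerivAt.comp_hasDerivAt x h

theorem HasDerivAt.matrix_mul_const {U : ℝ → Matrix n n ℝ} {U' : Matrix n n ℝ} {x : ℝ}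
    (h : HasDerivAt U U' x) (D : Matrix n n ℝ) : HasDerivAt (fun y => U y * D) (U' * D) x :=
  (LinearMap.mulRight ℝ D).toContinuousLinearMap.hasFDerivAt.comp_hasDerivAt x h

theorem Matrix.ODE_solution_unique_of_continuous {A : ℝ → Matrix n n ℝ} (hA : Continuous A)
    {f g : ℝ → Matrix n n ℝ} {t₀ : ℝ} (hf : ∀ t, HasDerivAt f (A t * f t) t)
    (hg : ∀ t, HasDerivAt g (A t * g t) t) (heq : f t₀ = g t₀) : f = g := by
  let L : Matrix n n ℝ →ₗ[ℝ] Matrix n n ℝ →L[ℝ] Matrix n n ℝ :=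
    LinearMap.toContinuousLinearMap.toLinearMap ∘ₗ LinearMap.mul ℝ (Matrix n n ℝ)
  exact ODE_solution_unique_of_continuous_clm (A := fun t => L (A t))
    (L.continuous_of_finiteDimensional.comp hA) hf hg heq

end MatrixODE

theorem stmt7_general (m : ℕ)
    (D : Matrix (Fin m) (Fin m) ℝ)
    (B : ℝ → Matrix (Fin m) (Fin m) ℝ) (hBcont : Continuous B)
    (hDB : ∀ x : ℝ, D * B x = B x * D)
    (U : ℝ → Matrix (Fin m) (Fin m) ℝ)
    (hU : ∀ x : ℝ, HasDerivAt U (-(1/2 : ℝ) • (D⁻¹ * B x * U x)) x)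
    (hU0 : U 0 = 1) :
    ∀ x : ℝ, D * U x = U x * D := by
  set A : ℝ → Matrix (Fin m) (Fin m) ℝ := fun x => -(1/2 : ℝ) • (D⁻¹ * B x)
  have hA : Continuous A := by fun_prop
  have hDA : ∀ x, Commute D (A x) := fun x =>
    ((Matrix.zpow_neg_one D ▸ Matrix.Commute.self_zpow D (-1)).mul_right (hDB x)).smul_right _
  have hUA : ∀ x, HasDerivAt U (A x * U x) x := fun x => by
    simpa only [A, smul_mul_assoc] using hU x
  refine congrFun (Matrix.ODE_solution_unique_of_continuous hA (t₀ := 0)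
    (fun x => ((hUA x).matrix_const_mul D).congr_deriv ?_)
    (fun x => ((hUA x).matrix_mul_const D).congr_deriv (Matrix.mul_assoc _ _ _)) (by simp [hU0]))
  rw [← Matrix.mul_assoc, (hDA x).eq, Matrix.mul_assoc]

/-- Core of Lemma 3.6: if `D` is invertible, `B` is continuous with `D B(x) = B(x) D`
for all `x`, and `U` solves `U′ = −(1/2)D⁻¹B(x)U`, `U(0) = E`, then `D U(x) = U(x) D`
for all `x`. -/
theorem stmt7 (m : ℕ) (hm : 1 ≤ m)
    (D : Matrix (Fin m) (Fin m) ℝ) (hD : IsUnit D.det)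
    (B : ℝ → Matrix (Fin m) (Fin m) ℝ) (hBcont : Continuous B)
    (hDB : ∀ x : ℝ, D * B x = B x * D)
    (U : ℝ → Matrix (Fin m) (Fin m) ℝ)
    (hU : ∀ x : ℝ, HasDerivAt U (-(1/2 : ℝ) • (D⁻¹ * B x * U x)) x)
    (hU0 : U 0 = 1) :
    ∀ x : ℝ, D * U x = U x * D :=
  stmt7_general m D B hBcont hDB U hU hU0
end

section
/- Let d > 0, ω ∈ ℝ, and L > 0. Then there exist sequences of real numbers (a_k)_{k≥1} and (ξ_k)_{k≥1} with ξ_k > 0, ξ_k → ∞, and such that a_k^β / ξ_k → 0 as k → ∞ for every β ∈ [0, 1/2), and for every k ≥ 1, every n ∈ ℤ, and every ℓ ∈ [−L, L] one has |Re(ω + d(2πn − iℓ)²) − a_k| > ξ_k; i.e., the vertical strips {z ∈ ℂ : a_k − ξ_k ≤ Re z ≤ a_k + ξ_k} contain no point of the form ω + d(2πn − iℓ)². (spectral gap estimate (2.5) verified in the proof of Lemma 4.1) -/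
open Set Filter

set_option maxHeartbeats 1000000 in
/-- Spectral gap estimate (2.5) verified in the proof of Lemma 4.1: for `d > 0`, `ω ∈ ℝ`
and `L > 0` there are sequences `(a_k)`, `(ξ_k)` with `ξ_k > 0`, `ξ_k → ∞`,
`a_k^β/ξ_k → 0` for every `β ∈ [0, 1/2)`, such that the vertical strips
`{z : a_k − ξ_k ≤ Re z ≤ a_k + ξ_k}` contain no point `ω + d(2πn − iℓ)²` with `n ∈ ℤ`,
`ℓ ∈ [−L, L]`. -/
theorem stmt15 (d ω L : ℝ) (hd : 0 < d) (hL : 0 < L) :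
    ∃ a ξ : ℕ → ℝ, (∀ k, 0 ≤ a k) ∧ (∀ k, 0 < ξ k) ∧
      Tendsto ξ atTop atTop ∧
      (∀ β : ℝ, 0 ≤ β → β < 1/2 →
        Tendsto (fun k => a k ^ β / ξ k) atTop (nhds 0)) ∧
      ∀ k : ℕ, ∀ n : ℤ, ∀ ℓ ∈ Icc (-L) L,
        |((ω : ℂ) + (d : ℂ) *
            (2 * (Real.pi : ℂ) * (n : ℂ) - Complex.I * (ℓ : ℂ)) ^ 2).re - a k| > ξ k := by
  have hπ : (3 : ℝ) < Real.pi := Real.pi_gt_three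
  have hπ2 : (9 : ℝ) < Real.pi ^ 2 := by nlinarith
  set M : ℕ := ⌈L^2⌉₊ + ⌈|ω|/d⌉₊ + 1 with hM
  set x : ℕ → ℝ := fun k => ((k + M : ℕ) : ℝ) with hxdef
  have hxM : ∀ k, (M : ℝ) ≤ x k := by
    intro k; simp only [hxdef]; push_cast; linarith [Nat.cast_nonneg (α := ℝ) k]
  have hML : L ^ 2 ≤ (M : ℝ) := by
    calc L^2 ≤ (⌈L^2⌉₊ : ℝ) := Nat.le_ceil _
    _ ≤ M := by simp only [hM]; push_cast; linarith [Nat.cast_nonneg (α := ℝ) ⌈|ω|/d⌉₊]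
  have hMω : |ω| / d ≤ (M : ℝ) := by
    calc |ω|/d ≤ (⌈|ω|/d⌉₊ : ℝ) := Nat.le_ceil _
    _ ≤ M := by simp only [hM]; push_cast; linarith [Nat.cast_nonneg (α := ℝ) ⌈L^2⌉₊]
  have hM1 : (1 : ℝ) ≤ (M : ℝ) := by
    simp only [hM]; push_cast
    linarith [Nat.cast_nonneg (α := ℝ) ⌈L^2⌉₊, Nat.cast_nonneg (α := ℝ) ⌈|ω|/d⌉₊]
  have hx1 : ∀ k, (1 : ℝ) ≤ x k := fun k => le_trans hM1 (hxM k)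
  have hxL : ∀ k, L ^ 2 ≤ x k := fun k => le_trans hML (hxM k)
  have hxω : ∀ k, |ω| ≤ d * x k := by
    intro k
    have := (div_le_iff₀ hd).mp (le_trans hMω (hxM k))
    linarith
  -- the half-gap quantity G k := 4π²(2 x k + 1) - L²
  have hgap : ∀ k, 71 * x k + 36 ≤ 4*Real.pi^2*(2*(x k)+1) - L^2 := by
    intro k
    have h1 := hx1 k; have h2 := hxL k
    have hp : 9*(2*(x k)+1) ≤ Real.pi^2*(2*(x k)+1) :=
      mul_le_mul_of_nonneg_right hπ2.le (by linarith)
    linarith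
  have hGpos : ∀ k, (0:ℝ) < 4*Real.pi^2*(2*(x k)+1) - L^2 := by
    intro k; have := hgap k; have := hx1 k; linarith
  -- lower bound on the "a-offset" quantity
  have hsq : ∀ k, 2 * x k ≤ 4*Real.pi^2*((x k)^2 + (x k + 1)^2) - L^2 := by
    intro k
    have h1 := hx1 k; have h2 := hxL k
    nlinarith [mul_le_mul_of_nonneg_right hπ2.le (sq_nonneg (x k)),
      mul_nonneg (sq_nonneg Real.pi) (sq_nonneg (x k + 1)),
      mul_nonneg (show (0:ℝ) ≤ x k by linarith) (show (0:ℝ) ≤ x k - 1 by linarith)]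
  have ha0 : ∀ k, 0 ≤ ω + d * (4*Real.pi^2*((x k)^2 + (x k + 1)^2) - L^2)/2 := by
    intro k
    have h3 := hxω k
    have habs : -ω ≤ |ω| := neg_le_abs ω
    have := mul_le_mul_of_nonneg_left (hsq k) hd.le
    linarith
  have hξlb : ∀ k, d * (x k + 1) ≤ d * (4*Real.pi^2*(2*(x k)+1) - L^2)/4 := by
    intro k
    have h1 := hx1 k
    have := mul_le_mul_of_nonneg_left (hgap k) hd.le
    nlinarith [mul_nonneg hd.le (show (0:ℝ) ≤ x k by linarith)]
  have hξpos : ∀ k, (0:ℝ) < d * (4*Real.pi^2*(2*(x k)+1) - L^2)/4 := by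
    intro k; have := hGpos k; positivity
  refine ⟨fun k => ω + d * (4*Real.pi^2*((x k)^2 + (x k + 1)^2) - L^2)/2,
    fun k => d * (4*Real.pi^2*(2*(x k)+1) - L^2)/4, ha0, hξpos, ?_, ?_, ?_⟩
  · -- ξ → ∞
    apply tendsto_atTop_mono (f := fun k : ℕ => d * k)
    · intro k
      have hk : (k : ℝ) ≤ x k := by
        simp only [hxdef]; push_cast; linarith [Nat.cast_nonneg (α := ℝ) M]
      have h1 := mul_le_mul_of_nonneg_left (hgap k) hd.le
      have h2 := mul_le_mul_of_nonneg_left hk hd.le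
      have h3 : (0:ℝ) ≤ d * x k := mul_nonneg hd.le (by linarith [hx1 k])
      linarith
    · exact tendsto_natCast_atTop_atTop.const_mul_atTop hd
  · -- a^β / ξ → 0
    intro β hβ0 hβ
    set C : ℝ := |ω| + 4*Real.pi^2*d with hC
    have hC0 : 0 < C := by positivity
    have haub : ∀ k, ω + d * (4*Real.pi^2*((x k)^2 + (x k + 1)^2) - L^2)/2 ≤ C * (x k + 1)^2 := by
      intro k
      have h1 := hx1 k
      have habs : ω ≤ |ω| := le_abs_self ω
      have hωsq : |ω| ≤ |ω| * (x k + 1)^2 := by nlinarith [mul_nonneg (abs_nonneg ω) (show (0:ℝ) ≤ (x k + 1)^2 - 1 by nlinarith)]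
      have hA : (x k)^2 ≤ (x k + 1)^2 := by nlinarith
      have := mul_le_mul_of_nonneg_left hA (mul_nonneg hd.le (sq_nonneg Real.pi))
      nlinarith [mul_nonneg hd.le (sq_nonneg L)]
    have key : ∀ k, (ω + d * (4*Real.pi^2*((x k)^2 + (x k + 1)^2) - L^2)/2) ^ β /
        (d * (4*Real.pi^2*(2*(x k)+1) - L^2)/4) ≤ (C^β/d) * (x k + 1) ^ (2*β - 1) := by
      intro k
      have hx1k := hx1 k
      have hxp : (0:ℝ) < x k + 1 := by linarith
      have hnum : (ω + d * (4*Real.pi^2*((x k)^2 + (x k + 1)^2) - L^2)/2) ^ β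
          ≤ C^β * (x k + 1) ^ (2*β) := by
        calc (ω + d * (4*Real.pi^2*((x k)^2 + (x k + 1)^2) - L^2)/2) ^ β
            ≤ (C * (x k + 1)^2) ^ β := Real.rpow_le_rpow (ha0 k) (haub k) hβ0
          _ = C^β * (x k + 1) ^ (2*β) := by
              rw [Real.mul_rpow hC0.le (by positivity), ← Real.rpow_natCast (x k + 1) 2,
                ← Real.rpow_mul hxp.le]
              norm_num
      calc (ω + d * (4*Real.pi^2*((x k)^2 + (x k + 1)^2) - L^2)/2) ^ β /
            (d * (4*Real.pi^2*(2*(x k)+1) - L^2)/4)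
          ≤ C^β * (x k + 1) ^ (2*β) / (d * (x k + 1)) := by
            apply div_le_div₀ (by positivity) hnum (by positivity) (hξlb k)
        _ = (C^β/d) * (x k + 1) ^ (2*β - 1) := by
            rw [Real.rpow_sub hxp, Real.rpow_one]
            field_simp
    have hlim : Tendsto (fun k => (C^β/d) * (x k + 1) ^ (2*β - 1)) atTop (nhds 0) := by
      have h1 : Tendsto (fun k : ℕ => x k + 1) atTop atTop := by
        apply tendsto_atTop_add_const_right
        exact tendsto_natCast_atTop_atTop.comp (tendsto_add_atTop_nat M)
      have h2 : Tendsto (fun y : ℝ => y ^ (2*β - 1)) atTop (nhds 0) := by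
        rw [show (2*β - 1) = -(1-2*β) by ring]
        exact tendsto_rpow_neg_atTop (by linarith)
      have := (h2.comp h1).const_mul (C^β/d)
      simpa using this
    refine squeeze_zero (fun k => ?_) key hlim
    exact div_nonneg (Real.rpow_nonneg (ha0 k) β) (hξpos k).le
  · -- gap estimate
    intro k n ℓ hℓ
    have hre : ((ω : ℂ) + (d : ℂ) * (2 * (Real.pi : ℂ) * (n : ℂ) - Complex.I * (ℓ : ℂ)) ^ 2).re
        = ω + d * (4*Real.pi^2*(n:ℝ)^2 - ℓ^2) := by
      simp [Complex.add_re, Complex.mul_re, pow_two]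
      ring_nf
      tauto
    rw [hre]
    simp only [gt_iff_lt]
    obtain ⟨hℓ1, hℓ2⟩ := hℓ
    have hℓsq : ℓ^2 ≤ L^2 := by nlinarith
    have hℓ0 : 0 ≤ ℓ^2 := sq_nonneg ℓ
    have h1 := hx1 k
    have hGp := hGpos k
    have h4π : (0:ℝ) ≤ 4*Real.pi^2 := by positivity
    rcases le_or_gt n.natAbs (k + M) with hn | hn
    · -- n² ≤ (x k)²
      have hnsq : (n:ℝ)^2 ≤ (x k)^2 := by
        have hZ : |n| ≤ ((k + M : ℕ) : ℤ) := by
          rw [Int.abs_eq_natAbs]; exact_mod_cast hn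
        have hcast : ((|n| : ℤ) : ℝ) ≤ x k := by
          simp only [hxdef]; exact_mod_cast hZ
        have hsq' : (n:ℝ)^2 = ((|n| : ℤ) : ℝ)^2 := by push_cast; rw [sq_abs]
        have hnn : (0:ℝ) ≤ ((|n| : ℤ) : ℝ) := by positivity
        rw [hsq']
        nlinarith [hnn]
      have hX : (4*Real.pi^2*(2*(x k)+1) - L^2)/2 ≤
          (4*Real.pi^2*((x k)^2 + (x k + 1)^2) - L^2)/2 - (4*Real.pi^2*(n:ℝ)^2 - ℓ^2) := by
        nlinarith [mul_le_mul_of_nonneg_left hnsq h4π]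
      rw [abs_sub_comm, lt_abs]
      left
      calc d * (4*Real.pi^2*(2*(x k)+1) - L^2)/4
          < d * ((4*Real.pi^2*((x k)^2 + (x k + 1)^2) - L^2)/2 - (4*Real.pi^2*(n:ℝ)^2 - ℓ^2)) := by
            nlinarith [mul_le_mul_of_nonneg_left hX hd.le, mul_pos hd hGp]
        _ = (ω + d * (4*Real.pi^2*((x k)^2 + (x k + 1)^2) - L^2)/2)
              - (ω + d * (4*Real.pi^2*(n:ℝ)^2 - ℓ^2)) := by ring
    · -- n² ≥ (x k + 1)²
      have hnsq : (x k + 1)^2 ≤ (n:ℝ)^2 := by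
        have hZ : ((k + M : ℕ) : ℤ) + 1 ≤ |n| := by
          rw [Int.abs_eq_natAbs]; exact_mod_cast Nat.succ_le_of_lt hn
        have hcast : x k + 1 ≤ ((|n| : ℤ) : ℝ) := by
          simp only [hxdef]; exact_mod_cast hZ
        have hsq' : (n:ℝ)^2 = ((|n| : ℤ) : ℝ)^2 := by push_cast; rw [sq_abs]
        have hnn : (0:ℝ) ≤ ((|n| : ℤ) : ℝ) := by positivity
        rw [hsq']
        nlinarith
      have hX : (4*Real.pi^2*(2*(x k)+1) - L^2)/2 ≤
          (4*Real.pi^2*(n:ℝ)^2 - ℓ^2) - (4*Real.pi^2*((x k)^2 + (x k + 1)^2) - L^2)/2 := by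
        nlinarith [mul_le_mul_of_nonneg_left hnsq h4π]
      rw [lt_abs]
      left
      calc d * (4*Real.pi^2*(2*(x k)+1) - L^2)/4
          < d * ((4*Real.pi^2*(n:ℝ)^2 - ℓ^2) - (4*Real.pi^2*((x k)^2 + (x k + 1)^2) - L^2)/2) := by
            nlinarith [mul_le_mul_of_nonneg_left hX hd.le, mul_pos hd hGp]
        _ = (ω + d * (4*Real.pi^2*(n:ℝ)^2 - ℓ^2))
              - (ω + d * (4*Real.pi^2*((x k)^2 + (x k + 1)^2) - L^2)/2) := by ring
end

section
/- Let d > 0, let C be an invertible real m×m matrix, and let H : ℝ → M_m(ℝ) be a continuous matrix-valued function such that every H(x) is symmetric and H(x₁)H(x₂) = H(x₂)H(x₁) for all x₁, x₂. Suppose U : [0,1] → M_m(ℝ) is differentiable with U′(x) = −(1/2)·C H(x) C⁻¹·U(x) and U(0) = E. Then U(1) is invertible and the monodromy matrix V₁ = U(1)⁻¹ satisfies V₁ = C P C⁻¹ with the symmetric positive definite matrix P = exp((1/2)∫₀¹ H(x)dx); in particular V₁ is similar, via the constant matrix C, to a positive definite matrix. (core of the proof of Lemma 4.4) -/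
/-!
Conjugating by `C` turns the equation into `V' = -½ H V` for `V = C⁻¹ U C`. The values of
`T t = ½ ∫₀ᵗ H` commute with each other and with `H`, so `exp (T t)` is an integrating factor:
`exp (T t) * V t` has derivative `0`, whence `exp (T 1) * V 1 = V 0 = 1`. Thus
`U 1⁻¹ = C exp (T 1) C⁻¹`, and `P = exp (T 1) = Qᴴ Q` with `Q = exp (T 1 / 2)` invertible is
positive definite.
-/

open Matrix MeasureTheory Set NormedSpace
open scoped ComplexOrder

attribute [local instance] Matrix.normedAddCommGroup Matrix.normedSpace

section NormedAlgebra

variable {𝕂 𝔸 : Type*} [RCLike 𝕂] [NormedRing 𝔸] [NormedAlgebra 𝕂 𝔸] [CompleteSpace 𝔸]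

theorem hasDerivWithinAt_exp_of_commute {S : 𝕂 → 𝔸} {S' : 𝔸} {s : Set 𝕂} {x : 𝕂}
    (hS : HasDerivWithinAt S S' s x) (hcomm : ∀ y ∈ s, Commute (S y) (S x)) :
    HasDerivWithinAt (fun t => exp (S t)) (S' * exp (S x)) s x := by
  have hshift : HasDerivWithinAt (fun t => exp (S t - S x)) S' s x := by
    have h0 : HasFDerivAt exp (1 : 𝔸 →L[𝕂] 𝔸) (S x - S x) := by
      simpa using hasFDerivAt_exp_zero (𝕂 := 𝕂) (𝔸 := 𝔸)
    exact h0.comp_hasDerivWithinAt x (hS.sub_const (S x))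
  refine (hshift.mul_const (exp (S x))).congr (fun y hy => ?_) (by simp)
  -- `exp_add_of_commute` is stated for normed `ℚ`-algebras
  let := NormedAlgebra.restrictScalars ℚ 𝕂 𝔸
  rw [← exp_add_of_commute ((hcomm y hy).sub_left (Commute.refl _)), sub_add_cancel]

end NormedAlgebra

section LinearODE

variable {𝔸 : Type*} [NormedRing 𝔸] [NormedAlgebra ℝ 𝔸] [CompleteSpace 𝔸]

theorem exp_mul_eq_of_hasDerivWithinAt {S A U : ℝ → 𝔸} {a b : ℝ} (hab : a ≤ b)
    (hS : ∀ x ∈ Icc a b, HasDerivWithinAt S (A x) (Icc a b) x)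
    (hScomm : ∀ x ∈ Icc a b, ∀ y ∈ Icc a b, Commute (S x) (S y))
    (hAS : ∀ x ∈ Icc a b, Commute (A x) (S x))
    (hU : ∀ x ∈ Icc a b, HasDerivWithinAt U (-(A x * U x)) (Icc a b) x) :
    exp (S b) * U b = exp (S a) * U a := by
  have hderiv : ∀ x ∈ Icc a b, HasDerivWithinAt (fun t => exp (S t) * U t) 0 (Icc a b) x := by
    intro x hx
    have hexp := hasDerivWithinAt_exp_of_commute (hS x hx) fun y hy => hScomm y hy x hx
    convert hexp.fun_mul (hU x hx) using 1
    rw [mul_neg, ← mul_assoc, ← (hAS x hx).exp_right.eq, add_neg_cancel]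
  have hle := (convex_Icc a b).norm_image_sub_le_of_norm_hasDerivWithin_le hderiv
    (fun _ _ => (norm_zero (E := 𝔸)).le) (left_mem_Icc.2 hab) (right_mem_Icc.2 hab)
  rwa [zero_mul, norm_le_zero_iff, sub_eq_zero] at hle

end LinearODE

namespace Matrix

variable {n : Type*} [Fintype n]

theorem IsSymm.intervalIntegral {f : ℝ → Matrix n n ℝ} (hf : Continuous f) (a b : ℝ)
    (h : ∀ x, (f x).IsSymm) : (∫ x in a..b, f x).IsSymm := by
  have ht : (∫ x in a..b, f x)ᵀ = ∫ x in a..b, (f x)ᵀ :=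
    ((transposeLinearEquiv n n ℝ ℝ).toLinearMap.toContinuousLinearMap.intervalIntegral_comp_comm
      (hf.intervalIntegrable a b)).symm
  rw [IsSymm, ht]
  simp_rw [(h _).eq]

variable [DecidableEq n]

theorem commute_intervalIntegral_right {f : ℝ → Matrix n n ℝ} (hf : Continuous f) (a b : ℝ)
    {A : Matrix n n ℝ} (h : ∀ x, Commute A (f x)) : Commute A (∫ x in a..b, f x) := by
  have hl : A * ∫ x in a..b, f x = ∫ x in a..b, A * f x :=
    ((LinearMap.mulLeft ℝ A).toContinuousLinearMap.intervalIntegral_comp_comm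
      (hf.intervalIntegrable a b)).symm
  have hr : (∫ x in a..b, f x) * A = ∫ x in a..b, f x * A :=
    ((LinearMap.mulRight ℝ A).toContinuousLinearMap.intervalIntegral_comp_comm
      (hf.intervalIntegrable a b)).symm
  rw [Commute, SemiconjBy, hl, hr]
  simp_rw [(h _).eq]

variable {𝕂 : Type*} [RCLike 𝕂]

theorem IsHermitian.posDef_exp {A : Matrix n n 𝕂} (hA : A.IsHermitian) :
    (NormedSpace.exp A).PosDef := by
  set Q := NormedSpace.exp ((1/2 : ℝ) • A)
  have hQ : Qᴴ = Q := (hA.smul (IsSelfAdjoint.all (1/2 : ℝ))).exp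
  have hexp : NormedSpace.exp A = Qᴴ * Q := by
    rw [hQ, ← Matrix.exp_add_of_commute _ _ (Commute.refl _), ← add_smul]
    norm_num
  rw [hexp]
  exact .conjTranspose_mul_self Q (mulVec_injective_of_isUnit (isUnit_exp _))

/- `HasDerivWithinAt` and `exp` only see the topology of matrices, which the Frobenius norm
induces definitionally; so the calculus of normed algebras applies after switching to it. -/

theorem hasDerivWithinAt_const_mul_mul_const {U : ℝ → Matrix n n 𝕂} {U' : Matrix n n 𝕂}
    {s : Set ℝ} {x : ℝ} (hU : HasDerivWithinAt U U' s x) (A B : Matrix n n 𝕂) :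
    HasDerivWithinAt (fun t => A * U t * B) (A * U' * B) s x := by
  let : NormedRing (Matrix n n 𝕂) := frobeniusNormedRing
  let : NormedAlgebra ℝ (Matrix n n 𝕂) := frobeniusNormedAlgebra
  exact (hU.const_mul A).mul_const B

theorem exp_mul_eq_of_hasDerivWithinAt {S A U : ℝ → Matrix n n 𝕂} {a b : ℝ} (hab : a ≤ b)
    (hS : ∀ x ∈ Icc a b, HasDerivWithinAt S (A x) (Icc a b) x)
    (hScomm : ∀ x ∈ Icc a b, ∀ y ∈ Icc a b, Commute (S x) (S y))
    (hAS : ∀ x ∈ Icc a b, Commute (A x) (S x))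
    (hU : ∀ x ∈ Icc a b, HasDerivWithinAt U (-(A x * U x)) (Icc a b) x) :
    exp (S b) * U b = exp (S a) * U a := by
  let : NormedRing (Matrix n n 𝕂) := frobeniusNormedRing
  let : NormedAlgebra ℝ (Matrix n n 𝕂) := frobeniusNormedAlgebra
  have : @CompleteSpace (Matrix n n 𝕂) PseudoMetricSpace.toUniformSpace :=
    (inferInstance : CompleteSpace (Matrix n n 𝕂))
  exact _root_.exp_mul_eq_of_hasDerivWithinAt hab hS hScomm hAS hU

end Matrix

theorem stmt16_general (m : ℕ)
    (C : Matrix (Fin m) (Fin m) ℝ) (hC : IsUnit C.det)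
    (H : ℝ → Matrix (Fin m) (Fin m) ℝ) (hHcont : Continuous H)
    (hHsymm : ∀ x : ℝ, (H x).IsSymm)
    (hHcomm : ∀ x₁ x₂ : ℝ, H x₁ * H x₂ = H x₂ * H x₁)
    (U : ℝ → Matrix (Fin m) (Fin m) ℝ) (hU0 : U 0 = 1)
    (hU : ∀ x ∈ Icc (0:ℝ) 1,
      HasDerivWithinAt U (-(1/2 : ℝ) • (C * H x * C⁻¹ * U x)) (Icc 0 1) x)
    (P : Matrix (Fin m) (Fin m) ℝ)
    (hP : P = NormedSpace.exp ((1/2 : ℝ) • ∫ x in (0:ℝ)..1, H x)) :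
    IsUnit (U 1) ∧ P.IsSymm ∧ P.PosDef ∧ (U 1)⁻¹ = C * P * C⁻¹ := by
  set T : ℝ → Matrix (Fin m) (Fin m) ℝ := fun t => (1/2 : ℝ) • ∫ x in (0:ℝ)..t, H x
  have hTsymm : (T 1).IsSymm := (IsSymm.intervalIntegral hHcont 0 1 hHsymm).smul _
  have hHT : ∀ x t, Commute (H x) (∫ y in (0:ℝ)..t, H y) :=
    fun x t => commute_intervalIntegral_right hHcont 0 t (hHcomm x)
  have hTT : ∀ s t, Commute (T s) (T t) := fun s t =>
    ((commute_intervalIntegral_right hHcont 0 t fun x => (hHT x s).symm).smul_left _).smul_right _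
  have hT : ∀ x, HasDerivAt T ((1/2 : ℝ) • H x) x :=
    fun x => (hHcont.integral_hasStrictDerivAt 0 x).hasDerivAt.fun_const_smul _
  have hV : ∀ x ∈ Icc (0:ℝ) 1, HasDerivWithinAt (fun t => C⁻¹ * U t * C)
      (-((1/2 : ℝ) • H x * (C⁻¹ * U x * C))) (Icc 0 1) x := by
    intro x hx
    convert hasDerivWithinAt_const_mul_mul_const (hU x hx) C⁻¹ C using 1
    simp [Matrix.mul_assoc, nonsing_inv_mul_cancel_left _ _ hC]
  have hconj : exp (T 1) * (C⁻¹ * U 1 * C) = 1 := by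
    have := exp_mul_eq_of_hasDerivWithinAt zero_le_one (fun x _ => (hT x).hasDerivWithinAt)
      (fun x _ y _ => hTT x y) (fun x _ => ((hHT x x).smul_left _).smul_right _) hV
    simpa [T, hU0, nonsing_inv_mul _ hC] using this
  have hinv : C * P * C⁻¹ * U 1 = 1 :=
    calc C * P * C⁻¹ * U 1 = C * (exp (T 1) * (C⁻¹ * U 1 * C)) * C⁻¹ := by
          simp only [hP, T, Matrix.mul_assoc, mul_nonsing_inv _ hC, Matrix.mul_one]
      _ = 1 := by rw [hconj, Matrix.mul_one, mul_nonsing_inv _ hC]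
  exact ⟨(isUnit_iff_isUnit_det _).2 (isUnit_det_of_left_inverse hinv), hP ▸ hTsymm.exp,
    hP ▸ (isHermitian_iff_isSymm.2 hTsymm).posDef_exp, inv_eq_left_inv hinv⟩

/-- Core of the proof of Lemma 4.4: if `H` is continuous with symmetric, pairwise
commuting values, `C` is invertible, and `U` solves `U′ = −(1/2)·C H(x) C⁻¹·U`,
`U(0) = E` on `[0,1]`, then `U(1)` is invertible and the monodromy matrix
`V₁ = U(1)⁻¹` equals `C P C⁻¹` with the symmetric positive definite matrix
`P = exp((1/2)∫₀¹ H(x)dx)`. -/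
theorem stmt16 (m : ℕ) (hm : 1 ≤ m) (d : ℝ) (hd : 0 < d)
    (C : Matrix (Fin m) (Fin m) ℝ) (hC : IsUnit C.det)
    (H : ℝ → Matrix (Fin m) (Fin m) ℝ) (hHcont : Continuous H)
    (hHsymm : ∀ x : ℝ, (H x).IsSymm)
    (hHcomm : ∀ x₁ x₂ : ℝ, H x₁ * H x₂ = H x₂ * H x₁)
    (U : ℝ → Matrix (Fin m) (Fin m) ℝ) (hU0 : U 0 = 1)
    (hU : ∀ x ∈ Icc (0:ℝ) 1,
      HasDerivWithinAt U (-(1/2 : ℝ) • (C * H x * C⁻¹ * U x)) (Icc 0 1) x)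
    (P : Matrix (Fin m) (Fin m) ℝ)
    (hP : P = NormedSpace.exp ((1/2 : ℝ) • ∫ x in (0:ℝ)..1, H x)) :
    IsUnit (U 1) ∧ P.IsSymm ∧ P.PosDef ∧ (U 1)⁻¹ = C * P * C⁻¹ :=
  stmt16_general m C hC H hHcont hHsymm hHcomm U hU0 hU P hP
end
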